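/- arXiv:2409.14626 — 4 statements merged into one kernel-verified Lean document; each statement's English description precedes it below -/
import Mathlib

section
/- Let t ↦ (x(t), v(t)) be a Kepler trajectory on an interval I, and suppose that at every t ∈ I one has 2/|x(t)| − |v(t)|² > 0 (i.e. H(x(t),v(t)) < 0) and that the (constant) eccentricity vector e = e(x(t),v(t)) satisfies 0 < |e| < 1. Let t₀ ∈ I with x(t₀)·v(t₀) ≠ 0, and let E : I → ℝ be differentiable with cos E(t) = (|v(t)|²|x(t)| − 1)/|e| and sin E(t) = ((x(t)·v(t))/|e|)·√(2/|x(t)| − |v(t)|²) for all t ∈ I. Then E'(t₀) = √(2/|x(t₀)| − |v(t₀)|²)/|x(t₀)|, and the mean anomaly Q(t) := E(t) − |e|·sin E(t) satisfies Q'(t₀) = (2/|x(t₀)| − |v(t₀)|²)^{3/2} = (−2·H(x(t₀),v(t₀)))^{3/2}. -/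
open scoped RealInnerProductSpace

noncomputable section

/-- The Kepler Hamiltonian `H(x,v) = |v|²/2 − 1/|x|`. -/
def keplerH (x v : EuclideanSpace ℝ (Fin 3)) : ℝ := ‖v‖ ^ 2 / 2 - 1 / ‖x‖

/-- The eccentricity (Runge–Lenz) vector `e(x,v) = (|v|² − 1/|x|)x − (x·v)v`. -/
def eccVec (x v : EuclideanSpace ℝ (Fin 3)) : EuclideanSpace ℝ (Fin 3) :=
  (‖v‖ ^ 2 - 1 / ‖x‖) • x - ⟪x, v⟫ • v

/-- Along a Kepler trajectory with negative energy and eccentricity `0 < |e| < 1`,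
the eccentric anomaly `E`, defined by `cos E = (|v|²|x| − 1)/|e|` and
`sin E = ((x·v)/|e|)·√(2/|x| − |v|²)`, satisfies `E'(t₀) = √(2/|x(t₀)| − |v(t₀)|²)/|x(t₀)|`
at any `t₀ ∈ I` with `x(t₀)·v(t₀) ≠ 0`, and the mean anomaly `Q = E − |e| sin E` satisfies
`Q'(t₀) = (2/|x(t₀)| − |v(t₀)|²)^{3/2} = (−2H(x(t₀),v(t₀)))^{3/2}`. -/
theorem eccentric_anomaly_deriv (I : Set ℝ) (hI : IsOpen I)
    (x v : ℝ → EuclideanSpace ℝ (Fin 3))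
    (hx0 : ∀ t ∈ I, x t ≠ 0)
    (hx : ∀ t ∈ I, HasDerivAt x (v t) t)
    (hv : ∀ t ∈ I, HasDerivAt v (-(‖x t‖ ^ 3)⁻¹ • x t) t)
    (hneg : ∀ t ∈ I, 0 < 2 / ‖x t‖ - ‖v t‖ ^ 2)
    (e : EuclideanSpace ℝ (Fin 3)) (he : ∀ t ∈ I, eccVec (x t) (v t) = e)
    (he0 : 0 < ‖e‖) (he1 : ‖e‖ < 1)
    (t₀ : ℝ) (ht₀ : t₀ ∈ I) (hxv : ⟪x t₀, v t₀⟫ ≠ 0)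
    (E : ℝ → ℝ) (hE : ∀ t ∈ I, DifferentiableAt ℝ E t)
    (hcos : ∀ t ∈ I, Real.cos (E t) = (‖v t‖ ^ 2 * ‖x t‖ - 1) / ‖e‖)
    (hsin : ∀ t ∈ I,
      Real.sin (E t) = (⟪x t, v t⟫ / ‖e‖) * Real.sqrt (2 / ‖x t‖ - ‖v t‖ ^ 2)) :
    deriv E t₀ = Real.sqrt (2 / ‖x t₀‖ - ‖v t₀‖ ^ 2) / ‖x t₀‖ ∧
    deriv (fun t => E t - ‖e‖ * Real.sin (E t)) t₀
      = (2 / ‖x t₀‖ - ‖v t₀‖ ^ 2) ^ ((3 : ℝ) / 2) ∧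
    (2 / ‖x t₀‖ - ‖v t₀‖ ^ 2) ^ ((3 : ℝ) / 2)
      = (-2 * keplerH (x t₀) (v t₀)) ^ ((3 : ℝ) / 2) := by
  have hxne := hx0 t₀ ht₀
  have hr0 : (0:ℝ) < ‖x t₀‖ := norm_pos_iff.mpr hxne
  have hrne : ‖x t₀‖ ≠ 0 := hr0.ne'
  have hene : ‖e‖ ≠ 0 := he0.ne'
  set r : ℝ := ‖x t₀‖ with hr_def
  set w : ℝ := ‖v t₀‖ with hw_def
  set p : ℝ := ⟪x t₀, v t₀⟫ with hp_def
  have hs : (0:ℝ) < 2 / r - w ^ 2 := hneg t₀ ht₀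
  set s : ℝ := 2 / r - w ^ 2 with hs_def
  have hsq0 : Real.sqrt s ≠ 0 := (Real.sqrt_pos.mpr hs).ne'
  have hss : Real.sqrt s * Real.sqrt s = s := Real.mul_self_sqrt hs.le
  -- derivative of ‖x t‖
  have hnx : HasDerivAt (fun t => ‖x t‖) (p / r) t₀ := by
    have h1 : HasDerivAt (fun t => ‖x t‖ ^ 2) (2 * ⟪x t₀, v t₀⟫) t₀ := (hx t₀ ht₀).norm_sq
    rw [← hp_def] at h1
    have h2 := h1.sqrt (by positivity)
    have h3 : (fun t => Real.sqrt (‖x t‖ ^ 2)) = fun t => ‖x t‖ := by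
      funext t; exact Real.sqrt_sq (norm_nonneg _)
    rw [h3] at h2
    convert h2 using 1
    rw [Real.sqrt_sq (norm_nonneg _), ← hr_def]
    field_simp
  -- derivative of ‖v t‖²
  have hnv : HasDerivAt (fun t => ‖v t‖ ^ 2) (-2 * p / r ^ 3) t₀ := by
    have h1 : HasDerivAt (fun t => ‖v t‖ ^ 2)
        (2 * ⟪v t₀, -(‖x t₀‖ ^ 3)⁻¹ • x t₀⟫) t₀ := (hv t₀ ht₀).norm_sq
    have h4 : ⟪v t₀, -(‖x t₀‖ ^ 3)⁻¹ • x t₀⟫ = -(r^3)⁻¹ * p := by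
      rw [real_inner_smul_right, real_inner_comm, ← hp_def, ← hr_def]
    rw [h4] at h1
    convert h1 using 1
    ring
  -- derivative of the cosine formula
  have hf : HasDerivAt (fun t => (‖v t‖ ^ 2 * ‖x t‖ - 1) / ‖e‖) (-(p * s) / (r * ‖e‖)) t₀ := by
    have h1 := ((hnv.mul hnx).sub_const 1).div_const ‖e‖
    refine h1.congr_deriv ?_
    rw [hs_def, ← hr_def, ← hw_def]
    field_simp
    ring
  have hE' := (hE t₀ ht₀).hasDerivAt
  have hC : HasDerivAt (fun t => Real.cos (E t)) (-Real.sin (E t₀) * deriv E t₀) t₀ := by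
    simpa [hE'.deriv] using hE'.cos
  have hEq : (fun t => Real.cos (E t)) =ᶠ[nhds t₀]
      (fun t => (‖v t‖ ^ 2 * ‖x t‖ - 1) / ‖e‖) :=
    Filter.eventuallyEq_of_mem (hI.mem_nhds ht₀) hcos
  have hC' : HasDerivAt (fun t => (‖v t‖ ^ 2 * ‖x t‖ - 1) / ‖e‖)
      (-Real.sin (E t₀) * deriv E t₀) t₀ := hC.congr_of_eventuallyEq hEq.symm
  have key : -Real.sin (E t₀) * deriv E t₀ = -(p * s) / (r * ‖e‖) := hC'.unique hf
  rw [hsin t₀ ht₀, ← hp_def, ← hr_def, ← hw_def, ← hs_def] at key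
  have k2 : p / ‖e‖ * Real.sqrt s * deriv E t₀ = p * s / (r * ‖e‖) := by
    linear_combination -key
  have hdE : deriv E t₀ = Real.sqrt s / r := by
    field_simp at k2 ⊢
    have k3 : (p * ‖e‖ * Real.sqrt s) * (deriv E t₀ * r) = (p * ‖e‖ * Real.sqrt s) * Real.sqrt s := by
      linear_combination (p * ‖e‖) * k2 - (p * ‖e‖) * hss
    exact mul_left_cancel₀ (by exact mul_ne_zero (mul_ne_zero hxv hene) hsq0) k3
  refine ⟨hdE, ?_, ?_⟩
  · have hQ : HasDerivAt (fun t => E t - ‖e‖ * Real.sin (E t))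
        (deriv E t₀ - ‖e‖ * (Real.cos (E t₀) * deriv E t₀)) t₀ := by
      have := hE'.sin.const_mul ‖e‖
      exact hE'.sub this
    rw [hQ.deriv, hdE, hcos t₀ ht₀, ← hr_def, ← hw_def]
    have h32 : s ^ ((3:ℝ)/2) = Real.sqrt s ^ 3 := by
      rw [← Real.rpow_natCast (Real.sqrt s) 3, Real.sqrt_eq_rpow, ← Real.rpow_mul hs.le]
      norm_num
    rw [h32]
    have h2mw : (2 : ℝ) - w^2*r = s * r := by rw [hs_def]; field_simp
    calc Real.sqrt s / r - ‖e‖ * ((w ^ 2 * r - 1) / ‖e‖ * (Real.sqrt s / r))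
        = Real.sqrt s / r * (2 - w^2*r) := by field_simp; ring
      _ = Real.sqrt s / r * (s * r) := by rw [h2mw]
      _ = Real.sqrt s * s := by field_simp
      _ = Real.sqrt s ^ 3 := by linear_combination (-Real.sqrt s) * hss
  · congr 1
    rw [keplerH, hs_def, hw_def, hr_def]
    ring
end
end

section
/- Let H < 0 and L > 0 be real numbers with 1 + 2HL > 0, and set r₋ = (1 − √(1+2HL))/(−2H) and r₊ = (1 + √(1+2HL))/(−2H). Then the Kepler period T_Kep(H, L) := 2·∫_{r₋}^{r₊} (H − L/(2r²) + 1/r)^{−1/2} dr equals π/(−H)^{3/2}. In particular T_Kep(H, L) does not depend on L. -/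
open Real MeasureTheory intervalIntegral Set

noncomputable section

private lemma rpow_neg_half_eq {t : ℝ} (ht : 0 ≤ t) :
    t ^ (-(1 / 2) : ℝ) = (Real.sqrt t)⁻¹ := by
  rw [Real.rpow_neg ht, ← Real.sqrt_eq_rpow]

private lemma kepler_integrable {k a b : ℝ} (hk : 0 < k) (ha : 0 < a) (hab : a < b) :
    IntervalIntegrable (fun r => (k * ((r - a) * (b - r)) / r ^ 2) ^ (-(1 / 2) : ℝ))
      volume a b := by
  set c := (a + b) / 2 with hc_def
  set m := (b - a) / 2 with hm_def
  have hm : 0 < m := by simp only [hm_def]; linarith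
  have hac : a < c := by simp only [hc_def]; linarith
  have hcb : c < b := by simp only [hc_def]; linarith
  have hb : 0 < b := lt_trans ha hab
  have hmeas : ∀ lo hi : ℝ, AEStronglyMeasurable
      (fun r : ℝ => (k * ((r - a) * (b - r)) / r ^ 2) ^ (-(1 / 2) : ℝ))
      (volume.restrict (Set.uIoc lo hi)) := by
    intro lo hi
    have hbase : Measurable fun r : ℝ => k * ((r - a) * (b - r)) / r ^ 2 :=
      (measurable_const.mul ((measurable_id.sub measurable_const).mul
        (measurable_const.sub measurable_id))).div (measurable_id.pow_const 2)
    have hrpow : Measurable fun t : ℝ => t ^ (-(1 / 2) : ℝ) := by measurability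
    exact (hrpow.comp hbase).aestronglyMeasurable
  have hK : 0 < k * m / b ^ 2 := by positivity
  -- integrable on [a, c]
  have int1 : IntervalIntegrable (fun r => (k * ((r - a) * (b - r)) / r ^ 2) ^ (-(1 / 2) : ℝ))
      volume a c := by
    have hbase : IntervalIntegrable (fun x : ℝ => (x - a) ^ (-(1 / 2) : ℝ)) volume a c := by
      have := (intervalIntegrable_rpow' (a := 0) (b := c - a)
        (by norm_num : (-1 : ℝ) < -(1 / 2))).comp_sub_right a
      simpa using this
    refine IntervalIntegrable.mono_fun' (hbase.const_mul ((k * m / b ^ 2) ^ (-(1 / 2) : ℝ)))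
      (hmeas a c) ?_
    rw [uIoc_of_le hac.le]
    refine (ae_restrict_iff' measurableSet_Ioc).2 (Filter.Eventually.of_forall ?_)
    intro x hx
    have hxa : a < x := hx.1
    have hxc : x ≤ c := hx.2
    have hxb : x < b := lt_of_le_of_lt hxc hcb
    have hx0 : 0 < x := lt_trans ha hxa
    have hlow : k * m / b ^ 2 * (x - a) ≤ k * ((x - a) * (b - x)) / x ^ 2 := by
      rw [div_mul_eq_mul_div, div_le_div_iff₀ (by positivity) (by positivity)]
      have hmb : m ≤ b - x := by simp only [hm_def]; linarith
      have hx2 : x ^ 2 ≤ b ^ 2 := by nlinarith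
      have key : m * x ^ 2 ≤ (b - x) * b ^ 2 :=
        mul_le_mul hmb hx2 (by positivity) (by linarith)
      nlinarith [mul_le_mul_of_nonneg_left key
        (mul_nonneg hk.le (by linarith : (0:ℝ) ≤ x - a))]
    have hlp : 0 < k * m / b ^ 2 * (x - a) := mul_pos hK (sub_pos.2 hxa)
    have hv0 : 0 ≤ k * ((x - a) * (b - x)) / x ^ 2 := le_trans hlp.le hlow
    simp only [Real.norm_eq_abs]
    rw [abs_of_nonneg (Real.rpow_nonneg hv0 _)]
    calc (k * ((x - a) * (b - x)) / x ^ 2) ^ (-(1 / 2) : ℝ)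
        ≤ (k * m / b ^ 2 * (x - a)) ^ (-(1 / 2) : ℝ) :=
          Real.rpow_le_rpow_of_nonpos hlp hlow (by norm_num)
      _ = (k * m / b ^ 2) ^ (-(1 / 2) : ℝ) * (x - a) ^ (-(1 / 2) : ℝ) :=
          Real.mul_rpow hK.le (by linarith)
  -- integrable on [c, b]
  have int2 : IntervalIntegrable (fun r => (k * ((r - a) * (b - r)) / r ^ 2) ^ (-(1 / 2) : ℝ))
      volume c b := by
    have hbase : IntervalIntegrable (fun x : ℝ => (b - x) ^ (-(1 / 2) : ℝ)) volume c b := by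
      have := (intervalIntegrable_rpow' (a := 0) (b := b - c)
        (by norm_num : (-1 : ℝ) < -(1 / 2))).comp_sub_left b
      have h2 := this.symm
      simpa using h2
    refine IntervalIntegrable.mono_fun' (hbase.const_mul ((k * m / b ^ 2) ^ (-(1 / 2) : ℝ)))
      (hmeas c b) ?_
    rw [uIoc_of_le hcb.le]
    refine (ae_restrict_iff' measurableSet_Ioc).2 (Filter.Eventually.of_forall ?_)
    intro x hx
    have hxc : c < x := hx.1
    have hxb : x ≤ b := hx.2
    have hxa : a < x := lt_trans hac hxc
    have hx0 : 0 < x := lt_trans ha hxa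
    have hbx : 0 ≤ b - x := by linarith
    have hlow : k * m / b ^ 2 * (b - x) ≤ k * ((x - a) * (b - x)) / x ^ 2 := by
      rw [div_mul_eq_mul_div, div_le_div_iff₀ (by positivity) (by positivity)]
      have hma : m ≤ x - a := by simp only [hm_def]; linarith
      have hx2 : x ^ 2 ≤ b ^ 2 := by nlinarith
      have key : m * x ^ 2 ≤ (x - a) * b ^ 2 :=
        mul_le_mul hma hx2 (by positivity) (by linarith)
      nlinarith [mul_le_mul_of_nonneg_left key
        (mul_nonneg hk.le hbx)]
    simp only [Real.norm_eq_abs]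
    by_cases hxb' : x = b
    · rw [hxb', show b - b = (0:ℝ) by ring, show k * ((b - a) * 0) / b ^ 2 = 0 by ring,
        Real.zero_rpow (by norm_num : (-(1/2) : ℝ) ≠ 0)]
      simp
    · have hxb'' : x < b := lt_of_le_of_ne hxb hxb'
      have hlp : 0 < k * m / b ^ 2 * (b - x) := mul_pos hK (by linarith)
      have hv0 : 0 ≤ k * ((x - a) * (b - x)) / x ^ 2 := le_trans hlp.le hlow
      rw [abs_of_nonneg (Real.rpow_nonneg hv0 _)]
      calc (k * ((x - a) * (b - x)) / x ^ 2) ^ (-(1 / 2) : ℝ)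
          ≤ (k * m / b ^ 2 * (b - x)) ^ (-(1 / 2) : ℝ) :=
            Real.rpow_le_rpow_of_nonpos hlp hlow (by norm_num)
        _ = (k * m / b ^ 2) ^ (-(1 / 2) : ℝ) * (b - x) ^ (-(1 / 2) : ℝ) :=
            Real.mul_rpow hK.le hbx
  exact int1.trans int2

private lemma kepler_aux (k a b : ℝ) (hk : 0 < k) (ha : 0 < a) (hab : a < b) :
    ∫ r in a..b, (k * ((r - a) * (b - r)) / r ^ 2) ^ (-(1 / 2) : ℝ)
      = Real.pi * (a + b) / (2 * Real.sqrt k) := by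
  set c := (a + b) / 2 with hc_def
  set m := (b - a) / 2 with hm_def
  have hm : 0 < m := by simp only [hm_def]; linarith
  have hb : 0 < b := lt_trans ha hab
  have hks : 0 < Real.sqrt k := Real.sqrt_pos.2 hk
  set F : ℝ → ℝ := fun r =>
      (Real.sqrt k)⁻¹ * (c * Real.arcsin ((r - c) / m) - Real.sqrt (m ^ 2 - (r - c) ^ 2))
    with hF_def
  have hcont : ContinuousOn F (Icc a b) := by
    apply Continuous.continuousOn
    apply continuous_const.mul
    apply Continuous.sub
    · exact continuous_const.mul (Real.continuous_arcsin.comp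
        ((continuous_id.sub continuous_const).div_const m))
    · exact Real.continuous_sqrt.comp
        (continuous_const.sub ((continuous_id.sub continuous_const).pow 2))
  have hderiv : ∀ x ∈ Ioo a b, HasDerivWithinAt F
      ((k * ((x - a) * (b - x)) / x ^ 2) ^ (-(1 / 2) : ℝ)) (Ioi x) x := by
    intro x hx
    have hxa : a < x := hx.1
    have hxb : x < b := hx.2
    have hx0 : 0 < x := lt_trans ha hxa
    have hu : 0 < m ^ 2 - (x - c) ^ 2 := by
      have h1 : (x - a) * (b - x) = m ^ 2 - (x - c) ^ 2 := by
        simp only [hm_def, hc_def]; ring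
      nlinarith
    have hus : 0 < Real.sqrt (m ^ 2 - (x - c) ^ 2) := Real.sqrt_pos.2 hu
    have hy1 : (-1 : ℝ) < (x - c) / m := by
      rw [lt_div_iff₀ hm]
      simp only [hc_def, hm_def]; nlinarith
    have hy2 : (x - c) / m < 1 := by
      rw [div_lt_iff₀ hm]
      simp only [hc_def, hm_def]; nlinarith
    have h1 : HasDerivAt (fun r : ℝ => (r - c) / m) (1 / m) x := by
      simpa using ((hasDerivAt_id x).sub_const c).div_const m
    have h2 : HasDerivAt (fun r : ℝ => Real.arcsin ((r - c) / m))
        (1 / Real.sqrt (1 - ((x - c) / m) ^ 2) * (1 / m)) x :=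
      by have := (Real.hasDerivAt_arcsin (ne_of_gt hy1) (ne_of_lt hy2)).comp x h1; exact this
    have h3 : HasDerivAt (fun r : ℝ => m ^ 2 - (r - c) ^ 2)
        (-((2 : ℕ) * (x - c) ^ 1 * 1)) x :=
      (((hasDerivAt_id x).sub_const c).pow 2).const_sub (m ^ 2)
    have h4 : HasDerivAt (fun r : ℝ => Real.sqrt (m ^ 2 - (r - c) ^ 2))
        (1 / (2 * Real.sqrt (m ^ 2 - (x - c) ^ 2)) * -((2 : ℕ) * (x - c) ^ 1 * 1)) x :=
      (Real.hasDerivAt_sqrt (ne_of_gt hu)).comp x h3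
    have hF : HasDerivAt F
        ((Real.sqrt k)⁻¹ * (c * (1 / Real.sqrt (1 - ((x - c) / m) ^ 2) * (1 / m))
          - 1 / (2 * Real.sqrt (m ^ 2 - (x - c) ^ 2)) * -((2 : ℕ) * (x - c) ^ 1 * 1))) x :=
      ((h2.const_mul c).sub h4).const_mul ((Real.sqrt k)⁻¹)
    have hsq : Real.sqrt (1 - ((x - c) / m) ^ 2) = Real.sqrt (m ^ 2 - (x - c) ^ 2) / m := by
      have : 1 - ((x - c) / m) ^ 2 = (m ^ 2 - (x - c) ^ 2) / m ^ 2 := by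
        field_simp
      rw [this, Real.sqrt_div hu.le, Real.sqrt_sq hm.le]
    have hval : (k * ((x - a) * (b - x)) / x ^ 2) ^ (-(1 / 2) : ℝ)
        = (Real.sqrt k)⁻¹ * (c * (1 / Real.sqrt (1 - ((x - c) / m) ^ 2) * (1 / m))
          - 1 / (2 * Real.sqrt (m ^ 2 - (x - c) ^ 2)) * -((2 : ℕ) * (x - c) ^ 1 * 1)) := by
      have h1' : (x - a) * (b - x) = m ^ 2 - (x - c) ^ 2 := by
        simp only [hm_def, hc_def]; ring
      rw [h1', rpow_neg_half_eq (by positivity),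
        Real.sqrt_div (by positivity : (0:ℝ) ≤ k * (m ^ 2 - (x - c) ^ 2)) (x ^ 2),
        Real.sqrt_mul hk.le, Real.sqrt_sq hx0.le, hsq]
      field_simp
      ring
    rw [hval]
    exact hF.hasDerivWithinAt
  have hint := kepler_integrable hk ha hab
  rw [integral_eq_sub_of_hasDeriv_right_of_le hab.le hcont hderiv hint]
  have hbc : b - c = m := by simp only [hc_def, hm_def]; ring
  have hac : a - c = -m := by simp only [hc_def, hm_def]; ring
  simp only [hF_def, hbc, hac]
  rw [div_self hm.ne', show -m / m = -1 by field_simp, Real.arcsin_one, Real.arcsin_neg,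
    Real.arcsin_one]
  rw [show m ^ 2 - m ^ 2 = 0 by ring, show m ^ 2 - (-m) ^ 2 = 0 by ring, Real.sqrt_zero]
  rw [hc_def]
  field_simp
  ring

/-- The Kepler period `T_Kep(H,L) = 2·∫_{r₋}^{r₊} (H − L/(2r²) + 1/r)^{−1/2} dr` equals
`π/(−H)^{3/2}`; in particular it does not depend on `L`. -/
theorem kepler_period (H L : ℝ) (hH : H < 0) (hL : 0 < L) (h1 : 0 < 1 + 2 * H * L) :
    2 * ∫ r in ((1 - Real.sqrt (1 + 2 * H * L)) / (-2 * H))..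
        ((1 + Real.sqrt (1 + 2 * H * L)) / (-2 * H)),
        (H - L / (2 * r ^ 2) + 1 / r) ^ (-(1 / 2) : ℝ)
      = Real.pi / (-H) ^ ((3 : ℝ) / 2) := by
  set D := Real.sqrt (1 + 2 * H * L) with hD_def
  have hD2 : D ^ 2 = 1 + 2 * H * L := Real.sq_sqrt h1.le
  have hD : 0 < D := Real.sqrt_pos.2 h1
  have hD1 : D < 1 := by nlinarith
  have hH2 : 0 < -2 * H := by linarith
  set a := (1 - D) / (-2 * H) with ha_def
  set b := (1 + D) / (-2 * H) with hb_def
  have ha : 0 < a := div_pos (by linarith) hH2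
  have hab : a < b := by
    rw [ha_def, hb_def, div_lt_div_iff₀ hH2 hH2]
    nlinarith
  have heq : EqOn (fun r => (H - L / (2 * r ^ 2) + 1 / r) ^ (-(1 / 2) : ℝ))
      (fun r => ((-H) * ((r - a) * (b - r)) / r ^ 2) ^ (-(1 / 2) : ℝ)) (uIcc a b) := by
    intro r hr
    rw [uIcc_of_le hab.le] at hr
    have hr0 : 0 < r := lt_of_lt_of_le ha hr.1
    have hbase : H - L / (2 * r ^ 2) + 1 / r = (-H) * ((r - a) * (b - r)) / r ^ 2 := by
      rw [ha_def, hb_def]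
      field_simp [hr0.ne', hH.ne]
      ring_nf
      linear_combination hD2
    simp only [hbase]
  rw [intervalIntegral.integral_congr heq,
    kepler_aux (-H) a b (by linarith) ha hab]
  have haddb : a + b = -1 / H := by
    rw [ha_def, hb_def]
    field_simp
    ring
  rw [haddb, show ((3 : ℝ) / 2) = 1 + 1 / 2 by norm_num,
    Real.rpow_add (by linarith : (0:ℝ) < -H), Real.rpow_one, ← Real.sqrt_eq_rpow]
  have hs : Real.sqrt (-H) ≠ 0 := (Real.sqrt_pos.2 (by linarith)).ne'
  field_simp
end
end

section
/- For all constants c, h, l₁ > 0 there exists b > 0, depending only on c, h and l₁, such that the following holds: for all real H and L with L ≥ l₁ and −1/(2L) + c ≤ H ≤ −h < 0 (which forces 0 < 1 + 2HL < 1), setting r₋ = (1 − √(1+2HL))/(−2H) and r₊ = (1 + √(1+2HL))/(−2H), one has |r₋ − L| ≥ b and |r₊ − L| ≥ b. -/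
noncomputable section

/-- For all `c, h, l₁ > 0` there is `b > 0` (depending only on `c, h, l₁`) such that
for all `H, L` with `L ≥ l₁` and `−1/(2L) + c ≤ H ≤ −h < 0` (which forces
`0 < 1 + 2HL < 1`), the turning radii `r∓ = (1 ∓ √(1+2HL))/(−2H)` satisfy
`|r₋ − L| ≥ b` and `|r₊ − L| ≥ b`. -/
theorem turning_points_away_from_L (c h l₁ : ℝ) (hc : 0 < c) (hh : 0 < h) (hl : 0 < l₁) :
    ∃ b : ℝ, 0 < b ∧
      ∀ H L : ℝ, l₁ ≤ L → -1 / (2 * L) + c ≤ H → H ≤ -h →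
        0 < 1 + 2 * H * L ∧ 1 + 2 * H * L < 1 ∧
        b ≤ |(1 - Real.sqrt (1 + 2 * H * L)) / (-2 * H) - L| ∧
        b ≤ |(1 + Real.sqrt (1 + 2 * H * L)) / (-2 * H) - L| := by
  set S := Real.sqrt (2 * c * l₁) with hSdef
  have hSpos : 0 < S := Real.sqrt_pos.mpr (by positivity)
  have hS2 : S ^ 2 = 2 * c * l₁ := Real.sq_sqrt (by positivity)
  refine ⟨min (S * (h * l₁ * l₁)) (S * l₁), lt_min (by positivity) (by positivity), ?_⟩
  intro H L h1 h2 h3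
  have hL : 0 < L := lt_of_lt_of_le hl h1
  have hH : H < 0 := lt_of_le_of_lt h3 (by linarith)
  have h2H : 0 < -2 * H := by linarith
  have hHne : H ≠ 0 := hH.ne
  have keym : (-1 / (2 * L) + c) * L ≤ H * L := mul_le_mul_of_nonneg_right h2 hL.le
  have keyv : (-1 / (2 * L) + c) * L = -1 / 2 + c * L := by field_simp
  have hcL : c * l₁ ≤ c * L := mul_le_mul_of_nonneg_left h1 hc.le
  have hu0 : 0 < 1 + 2 * H * L := by nlinarith [mul_pos hc hL]
  have hu1 : 1 + 2 * H * L < 1 := by nlinarith [mul_pos (neg_pos.mpr hH) hL]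
  set s := Real.sqrt (1 + 2 * H * L) with hsdef
  have hs2 : s ^ 2 = 1 + 2 * H * L := Real.sq_sqrt hu0.le
  have hspos : 0 < s := Real.sqrt_pos.mpr hu0
  have hslt1 : s < 1 := by nlinarith
  have hsS : S ≤ s := Real.sqrt_le_sqrt (by nlinarith)
  -- 1 - s ≥ h * l₁
  have hhl : h * l₁ ≤ (-H) * L :=
    mul_le_mul (by linarith) h1 hl.le (by linarith)
  have h1s : h * l₁ ≤ 1 - s := by nlinarith
  -- (-2H) * l₁ ≤ 1
  have h2Hl : (-2 * H) * l₁ ≤ 1 := by nlinarith [mul_le_mul_of_nonneg_left h1 h2H.le]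
  refine ⟨hu0, hu1, ?_, ?_⟩
  · have hval : (1 - s) / (-2 * H) - L = (s ^ 2 - s) / (-2 * H) := by
      have e : s ^ 2 - s = (1 - s) - L * (-2 * H) := by linarith
      rw [e]
      field_simp
      ring
    rw [hval, abs_of_nonpos (by
        apply div_nonpos_of_nonpos_of_nonneg _ h2H.le
        nlinarith)]
    refine le_trans (min_le_left _ _) ?_
    rw [← neg_div, le_div_iff₀ h2H]
    calc S * (h * l₁ * l₁) * (-2 * H) = (S * (h * l₁)) * ((-2 * H) * l₁) := by ring
      _ ≤ (S * (h * l₁)) * 1 := mul_le_mul_of_nonneg_left h2Hl (by positivity)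
      _ = S * (h * l₁) := mul_one _
      _ ≤ s * (1 - s) := mul_le_mul hsS h1s (by positivity) hspos.le
      _ = -(s ^ 2 - s) := by ring
  · have hval : (1 + s) / (-2 * H) - L = (s ^ 2 + s) / (-2 * H) := by
      have e : s ^ 2 + s = (1 + s) - L * (-2 * H) := by linarith
      rw [e]
      field_simp
      ring
    rw [hval, abs_of_nonneg (by positivity)]
    refine le_trans (min_le_right _ _) ?_
    rw [le_div_iff₀ h2H]
    calc S * l₁ * (-2 * H) = S * ((-2 * H) * l₁) := by ring
      _ ≤ S * 1 := mul_le_mul_of_nonneg_left h2Hl hSpos.le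
      _ = S := mul_one _
      _ ≤ s := hsS
      _ ≤ s ^ 2 + s := by linarith [sq_nonneg s]
end
end

section
/- Let Ω : ℝ → ℝ be continuously differentiable, let k, η, τ ∈ ℝ, and let h : ℝ × ℝ → ℂ be twice continuously differentiable, with variables written (t, H). Define (Y h)(t, H) := i·(k·t + η·τ)·Ω'(H)·h(t, H) + ∂_H h(t, H). If ∂_t h(t, H) + i·k·Ω(H)·h(t, H) = 0 for all (t, H) ∈ ℝ², then ∂_t (Y h)(t, H) + i·k·Ω(H)·(Y h)(t, H) = 0 for all (t, H) ∈ ℝ². -/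
noncomputable section

/-- The weighted vector field `Y = i(kt + ητ)Ω'(H) + ∂_H` commutes with the
fixed-Fourier-mode linear transport equation `∂_t h + ikΩ(H)h = 0`: if `h` solves the
equation, then so does `Y h`. -/
theorem commuting_vector_field (Ω : ℝ → ℝ) (hΩ : ContDiff ℝ 1 Ω) (k η τ : ℝ)
    (h : ℝ × ℝ → ℂ) (hh : ContDiff ℝ 2 h)
    (hpde : ∀ t H : ℝ,
      deriv (fun s => h (s, H)) t + Complex.I * k * Ω H * h (t, H) = 0) :
    ∀ t H : ℝ,
      deriv (fun s => Complex.I * (k * s + η * τ) * deriv Ω H * h (s, H)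
          + deriv (fun y => h (s, y)) H) t
        + Complex.I * k * Ω H *
            (Complex.I * (k * t + η * τ) * deriv Ω H * h (t, H)
              + deriv (fun y => h (t, y)) H) = 0 := by
  have hdh : Differentiable ℝ h := hh.differentiable (by norm_num)
  have hf' : ∀ p, HasFDerivAt h (fderiv ℝ h p) p := fun p => (hdh p).hasFDerivAt
  have hfd : ContDiff ℝ 1 (fderiv ℝ h) := hh.fderiv_right (by norm_num)
  have hdfd : Differentiable ℝ (fderiv ℝ h) := hfd.differentiable (by norm_num)
  -- partial derivative in t
  have pt : ∀ s y : ℝ, HasDerivAt (fun s' => h (s', y))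
      (fderiv ℝ h (s, y) ((1 : ℝ), (0 : ℝ))) s := fun s y =>
    (hf' (s, y)).comp_hasDerivAt s ((hasDerivAt_id s).prodMk (hasDerivAt_const s y))
  -- partial derivative in H
  have py : ∀ s y : ℝ, HasDerivAt (fun y' => h (s, y'))
      (fderiv ℝ h (s, y) ((0 : ℝ), (1 : ℝ))) y := fun s y =>
    (hf' (s, y)).comp_hasDerivAt y ((hasDerivAt_const y s).prodMk (hasDerivAt_id y))
  -- the PDE in fderiv form
  have hg : ∀ s y : ℝ, fderiv ℝ h (s, y) ((1 : ℝ), (0 : ℝ))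
      = -(Complex.I * k * Ω y * h (s, y)) := by
    intro s y
    have h0 := hpde s y
    rw [(pt s y).deriv] at h0
    linear_combination h0
  intro t H
  set B := fderiv ℝ (fderiv ℝ h) (t, H) with hBdef
  have hBat : HasFDerivAt (fderiv ℝ h) B (t, H) := (hdfd (t, H)).hasFDerivAt
  have hsymm : B ((1 : ℝ), (0 : ℝ)) ((0 : ℝ), (1 : ℝ))
      = B ((0 : ℝ), (1 : ℝ)) ((1 : ℝ), (0 : ℝ)) :=
    second_derivative_symmetric hf' hBat _ _
  -- derivative in t of the H-partial
  have hBt : HasDerivAt (fun s => fderiv ℝ h (s, H) ((0 : ℝ), (1 : ℝ)))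
      (B ((1 : ℝ), (0 : ℝ)) ((0 : ℝ), (1 : ℝ))) t := by
    have hev : HasFDerivAt (fun p => fderiv ℝ h p ((0 : ℝ), (1 : ℝ)))
        ((ContinuousLinearMap.apply ℝ ℂ ((0 : ℝ), (1 : ℝ))).comp B) (t, H) :=
      (ContinuousLinearMap.apply ℝ ℂ ((0 : ℝ), (1 : ℝ))).hasFDerivAt.comp (t, H) hBat
    have := hev.comp_hasDerivAt t ((hasDerivAt_id t).prodMk (hasDerivAt_const t H))
    exact this
  -- derivative in H of the t-partial
  have hBy : HasDerivAt (fun y => fderiv ℝ h (t, y) ((1 : ℝ), (0 : ℝ)))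
      (B ((0 : ℝ), (1 : ℝ)) ((1 : ℝ), (0 : ℝ))) H := by
    have hev : HasFDerivAt (fun p => fderiv ℝ h p ((1 : ℝ), (0 : ℝ)))
        ((ContinuousLinearMap.apply ℝ ℂ ((1 : ℝ), (0 : ℝ))).comp B) (t, H) :=
      (ContinuousLinearMap.apply ℝ ℂ ((1 : ℝ), (0 : ℝ))).hasFDerivAt.comp (t, H) hBat
    have := hev.comp_hasDerivAt H ((hasDerivAt_const H t).prodMk (hasDerivAt_id H))
    exact this
  -- compute the mixed partial using the PDE
  have hmix : B ((0 : ℝ), (1 : ℝ)) ((1 : ℝ), (0 : ℝ))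
      = -(Complex.I * k) * ((Complex.ofReal (deriv Ω H)) * h (t, H)
          + (Ω H : ℂ) * fderiv ℝ h (t, H) ((0 : ℝ), (1 : ℝ))) := by
    have hΩd : HasDerivAt (fun y => ((Ω y : ℂ))) ((Complex.ofReal (deriv Ω H))) H :=
      ((hΩ.differentiable (by norm_num) H).hasDerivAt).ofReal_comp
    have h2 : HasDerivAt (fun y => -(Complex.I * k) * ((Ω y : ℂ) * h (t, y)))
        (-(Complex.I * k) * ((Complex.ofReal (deriv Ω H)) * h (t, H)
          + (Ω H : ℂ) * fderiv ℝ h (t, H) ((0 : ℝ), (1 : ℝ)))) H := by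
      have := (hΩd.mul (py t H)).const_mul (-(Complex.I * k))
      exact this.congr_deriv (by ring)
    have heq : (fun y => fderiv ℝ h (t, y) ((1 : ℝ), (0 : ℝ)))
        = fun y => -(Complex.I * k) * ((Ω y : ℂ) * h (t, y)) := by
      funext y; rw [hg t y]; ring
    rw [heq] at hBy
    exact hBy.unique h2
  -- derivative of Y h in t
  have hc : HasDerivAt (fun s : ℝ => Complex.I * ((k : ℂ) * (s : ℂ) + (η : ℂ) * (τ : ℂ))
      * (Complex.ofReal (deriv Ω H))) (Complex.I * (k : ℂ) * (Complex.ofReal (deriv Ω H))) t := by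
    have h1 : HasDerivAt (fun s : ℝ => ((s : ℂ))) 1 t :=
      (hasDerivAt_id t).ofReal_comp
    have := (((h1.const_mul (k : ℂ)).add_const ((η : ℂ) * (τ : ℂ))).const_mul
      Complex.I).mul_const ((Complex.ofReal (deriv Ω H)))
    exact this.congr_deriv (by ring)
  have hYt : HasDerivAt (fun s : ℝ => Complex.I * ((k : ℂ) * (s : ℂ) + (η : ℂ) * (τ : ℂ))
      * (Complex.ofReal (deriv Ω H)) * h (s, H) + fderiv ℝ h (s, H) ((0 : ℝ), (1 : ℝ)))
      (Complex.I * (k : ℂ) * (Complex.ofReal (deriv Ω H)) * h (t, H)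
        + Complex.I * ((k : ℂ) * (t : ℂ) + (η : ℂ) * (τ : ℂ)) * (Complex.ofReal (deriv Ω H))
            * fderiv ℝ h (t, H) ((1 : ℝ), (0 : ℝ))
        + B ((1 : ℝ), (0 : ℝ)) ((0 : ℝ), (1 : ℝ))) t := by
    exact (hc.mul (pt t H)).add hBt
  -- rewrite the goal's inner derivatives
  have hgoalfun : (fun s : ℝ => Complex.I * ((k : ℂ) * (s : ℂ) + (η : ℂ) * (τ : ℂ))
      * (Complex.ofReal (deriv Ω H)) * h (s, H) + deriv (fun y => h (s, y)) H)
      = fun s : ℝ => Complex.I * ((k : ℂ) * (s : ℂ) + (η : ℂ) * (τ : ℂ))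
      * (Complex.ofReal (deriv Ω H)) * h (s, H) + fderiv ℝ h (s, H) ((0 : ℝ), (1 : ℝ)) := by
    funext s; rw [(py s H).deriv]
  rw [hgoalfun, hYt.deriv, (py t H).deriv, hg t H]
  rw [hsymm, hmix]
  ring
end
end
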